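/- Let X be a compact metric space, f : X → X continuous with the s-limit shadowing property, C a chain component, and D ∈ D(C). Then for each n ≥ 2 the set A_n = ∩_{ε>0} { (x_1,…,x_n) ∈ [V^s(D)]^n : T_f(x_1,…,x_n; ε) has upper density 1 } is a dense G_δ subset of [V^s(D)]^n. In fact, the set of n-tuples (x_1,…,x_n) ∈ [V^s(D)]^n all of whose coordinates are forward-asymptotic to a fixed point p ∈ V^s(D) (i.e., d(f^i(p), f^i(x_j)) → 0 for all j) is dense in [V^s(D)]^n and is contained in A_n. -/

import Mathlib

open Filter Topology Metric Set

variable {X : Type*} [MetricSpace X]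

/-- There is a `δ`-chain of `f` from `x` to `y`. -/
def ChainReach (f : X → X) (δ : ℝ) (x y : X) : Prop :=
  ∃ k : ℕ, 0 < k ∧ ∃ c : ℕ → X, c 0 = x ∧ c k = y ∧
    ∀ i < k, dist (f (c i)) (c (i + 1)) ≤ δ

/-- `x → y` : for every `δ > 0` there is a `δ`-chain from `x` to `y`. -/
def ChainTo (f : X → X) (x y : X) : Prop := ∀ δ > 0, ChainReach f δ x y

/-- The chain recurrent set. -/
def CR (f : X → X) : Set X := {x | ChainTo f x x}

/-- The relation `x ↔ y`. -/
def ChainRel (f : X → X) (x y : X) : Prop := ChainTo f x y ∧ ChainTo f y x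

/-- A chain component: an equivalence class of `↔` on `CR f`. -/
def IsChainComponent (f : X → X) (C : Set X) : Prop :=
  ∃ x ∈ CR f, C = {y | y ∈ CR f ∧ ChainRel f x y}

/-- A `δ`-chain of `f` from `x` to `y` of length `k`, all of whose points lie in `S`. -/
def ChainInLen (f : X → X) (S : Set X) (δ : ℝ) (x y : X) (k : ℕ) : Prop :=
  0 < k ∧ ∃ c : ℕ → X, (∀ i ≤ k, c i ∈ S) ∧ c 0 = x ∧ c k = y ∧
    ∀ i < k, dist (f (c i)) (c (i + 1)) ≤ δ

/-- There is a `δ`-chain from `x` to `y` inside `S`. -/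
def ChainInReach (f : X → X) (S : Set X) (δ : ℝ) (x y : X) : Prop :=
  ∃ k, ChainInLen f S δ x y k

/-- `f` restricted to `S` is chain transitive. -/
def ChainTransitiveOn (f : X → X) (S : Set X) : Prop :=
  ∀ x ∈ S, ∀ y ∈ S, ∀ δ > 0, ChainInReach f S δ x y

/-- The set of lengths of `δ`-cycles of `f` restricted to `C`. -/
def cycLengths (f : X → X) (C : Set X) (δ : ℝ) : Set ℕ :=
  {k | ∃ x ∈ C, ChainInLen f C δ x x k}

/-- The relation `∼_{C,δ}` : there is a `δ`-chain in `C` from `x` to `y` whose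
length is divisible by the gcd `m(C,δ)` of all `δ`-cycle lengths (divisibility by
the gcd is expressed via common divisors). -/
def relCdelta (f : X → X) (C : Set X) (δ : ℝ) (x y : X) : Prop :=
  ∃ k : ℕ, (∀ d : ℕ, (∀ l ∈ cycLengths f C δ, d ∣ l) → d ∣ k) ∧
    ChainInLen f C δ x y k

/-- The chain proximal relation `∼_C`. -/
def relC (f : X → X) (C : Set X) (x y : X) : Prop := ∀ δ > 0, relCdelta f C δ x y

/-- The class of `∼_{C,δ}` containing `x`. -/
def classCdelta (f : X → X) (C : Set X) (δ : ℝ) (x : X) : Set X :=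
  {y | y ∈ C ∧ relCdelta f C δ x y}

/-- The class of `∼_C` containing `x`. -/
def classC (f : X → X) (C : Set X) (x : X) : Set X :=
  {y | y ∈ C ∧ relC f C x y}

/-- The basin of attraction of a set. -/
def basin (f : X → X) (C : Set X) : Set X :=
  {x | Tendsto (fun i => infDist (f^[i] x) C) atTop (𝓝 0)}

/-- `V^s(D)` for the class `D` of `∼_C` containing the point `x ∈ C`. -/
def Vs (f : X → X) (C : Set X) (x : X) : Set X :=
  {z | z ∈ basin f C ∧ ∀ δ > 0,
    Tendsto (fun i => infDist (f^[i] z) (f^[i] '' classCdelta f C δ x)) atTop (𝓝 0)}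

/-- `(x i)` is a `δ`-limit-pseudo orbit of `f`. -/
def LimitPseudoOrbit (f : X → X) (δ : ℝ) (x : ℕ → X) : Prop :=
  (∀ i, dist (f (x i)) (x (i + 1)) ≤ δ) ∧
  Tendsto (fun i => dist (f (x i)) (x (i + 1))) atTop (𝓝 0)

/-- `f` has the s-limit shadowing property. -/
def SLimitShadowing (f : X → X) : Prop :=
  ∀ ε > 0, ∃ δ > 0, ∀ x : ℕ → X, LimitPseudoOrbit f δ x →
    ∃ z : X, (∀ i, dist (f^[i] z) (x i) ≤ ε) ∧
      Tendsto (fun i => dist (f^[i] z) (x i)) atTop (𝓝 0)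

/-- `f` has the shadowing property. -/
def Shadowing (f : X → X) : Prop :=
  ∀ ε > 0, ∃ δ > 0, ∀ x : ℕ → X, (∀ i, dist (f (x i)) (x (i + 1)) ≤ δ) →
    ∃ z : X, ∀ i, dist (f^[i] z) (x i) ≤ ε

/-- The upper density of a set of natural numbers. -/
noncomputable def upperDensity (A : Set ℕ) : ℝ :=
  Filter.limsup (fun n => ((A ∩ Set.Iio n).ncard : ℝ) / n) Filter.atTop

/-- The family of sets of upper density one. -/
def Fud1 : Set (Set ℕ) := {A | upperDensity A = 1}

/-- The family of thick sets. -/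
def Fthick : Set (Set ℕ) :=
  {A | ∀ j : ℕ, 1 ≤ j → ∃ i : ℕ, ∀ l < j, i + l ∈ A}

/-- The dual of the family of sets containing an arithmetic progression:
sets meeting every progression `{p, p+m, p+2m, …}` with `m ≥ 1`. -/
def FiapStar : Set (Set ℕ) :=
  {A | ∀ p : ℕ, ∀ m : ℕ, 1 ≤ m → ∃ q : ℕ, p + q * m ∈ A}

/-- The family of infinite sets. -/
def Finfinite : Set (Set ℕ) := {A | A.Infinite}

/-!
Tuples whose coordinates are all asymptotic to `p` are eventually pairwise `ε`-close, so their
`ε`-proximality times are cofinite and have upper density one. They are dense because every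
`y ∈ V^s(D)` is approximated by points asymptotic to `p`: follow the orbit of `y` until it is
`δ`-close to the orbit of some `a ∈ D_δ`, cross `C` by a `δ`-chain whose length lands exactly
at a time where the orbit of `p` is `δ`-close to the orbit of some `b ∈ D_δ`, then follow the
orbit of `p`, and shadow this `δ`-limit pseudo-orbit. Chains of the required length exist for
all large times since `a ∼_{C,δ} b` and the `δ`-cycle lengths through a point of `C` contain all
large multiples of their gcd `m(C, δ)` (a numerical-semigroup fact). Finally `Aₙ` is a `Gδ` because
each proximality condition at a fixed time is open and `upperDensity = 1` is a countable
intersection of unions of finite intersections of such conditions.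
-/

section Chains

variable {f : X → X} {S T : Set X} {δ η ε κ : ℝ} {x y z : X} {k l : ℕ}

theorem ChainInLen.mono_set (hST : S ⊆ T) (h : ChainInLen f S δ x y k) :
    ChainInLen f T δ x y k := by
  obtain ⟨hk, c, hcS, hc0, hck, hc⟩ := h
  exact ⟨hk, c, fun i hi => hST (hcS i hi), hc0, hck, hc⟩

theorem ChainInLen.mono_delta (hδ : δ ≤ η) (h : ChainInLen f S δ x y k) :
    ChainInLen f S η x y k := by
  obtain ⟨hk, c, hcS, hc0, hck, hc⟩ := h
  exact ⟨hk, c, hcS, hc0, hck, fun i hi => (hc i hi).trans hδ⟩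

theorem chainReach_iff : ChainReach f δ x y ↔ ∃ k, ChainInLen f univ δ x y k := by
  simp [ChainReach, ChainInLen]

theorem ChainInLen.trans (h₁ : ChainInLen f S δ x y k) (h₂ : ChainInLen f S δ y z l) :
    ChainInLen f S δ x z (k + l) := by
  obtain ⟨hk, c, hcS, hc0, hck, hc⟩ := h₁
  obtain ⟨hl, d, hdS, hd0, hdl, hd⟩ := h₂
  set w : ℕ → X := fun i => if i ≤ k then c i else d (i - k)
  have hwc : ∀ i ≤ k, w i = c i := fun i hi => if_pos hi
  have hwd : ∀ i ≥ k, w i = d (i - k) := fun i hi => by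
    rcases hi.eq_or_lt with rfl | hi
    · simp [w, hck, hd0]
    · simp [w, not_le.2 hi]
  refine ⟨by omega, w, fun i hi => ?_, by simp [w, hc0], by simp [hwd, hdl], fun i hi => ?_⟩
  · rcases le_total i k with h | h
    exacts [hwc i h ▸ hcS i h, hwd i h ▸ hdS _ (by omega)]
  · rcases lt_or_ge i k with h | h
    · rw [hwc i h.le, hwc (i + 1) h]
      exact hc i h
    · rw [hwd i h, hwd (i + 1) (by omega), (by omega : i + 1 - k = i - k + 1)]
      exact hd _ (by omega)

theorem chainInLen_one (hx : x ∈ S) (hy : y ∈ S) (h : dist (f x) y ≤ δ) :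
    ChainInLen f S δ x y 1 :=
  ⟨one_pos, fun i => if i = 0 then x else y, fun i _ => by dsimp only; split_ifs <;> assumption,
    by simp, by simp, fun i hi => by simpa [(by omega : i = 0)] using h⟩

theorem ChainInLen.iterate_right (hS : MapsTo f S S) (hδ : 0 ≤ δ)
    (h : ChainInLen f S δ x y k) (t : ℕ) : ChainInLen f S δ x (f^[t] y) (k + t) := by
  induction t with
  | zero => exact h
  | succ t ih =>
    have hyS : f^[t] y ∈ S := by
      obtain ⟨-, c, hcS, -, hck, -⟩ := ih
      exact hck ▸ hcS _ le_rfl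
    rw [Function.iterate_succ_apply', ← add_assoc]
    exact ih.trans (chainInLen_one hyS (hS hyS) (by simpa using hδ))

theorem chainInLen_univ_of_dist_iterate_le (hk : 0 < k) (h : dist (f^[k] x) y ≤ δ) :
    ChainInLen f univ δ x y k := by
  refine ⟨hk, fun i => if i < k then f^[i] x else y, fun _ _ => mem_univ _, by simp [hk],
    by simp, fun i hi => ?_⟩
  by_cases h' : i + 1 < k
  · simpa [hi, h', ← Function.iterate_succ_apply'] using dist_nonneg.trans h
  · simpa [hi, h', ← Function.iterate_succ_apply', (by omega : i + 1 = k)] using h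

theorem chainInLen_head {c : ℕ → X} (hc : ∀ j < k, dist (f (c j)) (c (j + 1)) ≤ δ)
    {i : ℕ} (hi : 0 < i) (hik : i ≤ k) : ChainInLen f univ δ (c 0) (c i) i :=
  ⟨hi, c, fun _ _ => mem_univ _, rfl, rfl, fun j hj => hc j (by omega)⟩

theorem chainInLen_tail {c : ℕ → X} (hc : ∀ j < k, dist (f (c j)) (c (j + 1)) ≤ δ)
    {i : ℕ} (hik : i < k) : ChainInLen f univ δ (c i) (c k) (k - i) :=
  ⟨by omega, fun j => c (i + j), fun _ _ => mem_univ _, rfl,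
    by simp only [Nat.add_sub_cancel' hik.le], fun j hj => hc (i + j) (by omega)⟩

theorem chainInLen_of_forall_dist_le (hmod : ∀ a b, dist a b ≤ κ → dist (f a) (f b) ≤ ε)
    {c W : ℕ → X} (hk : 0 < k) (hc : ∀ i < k, dist (f (c i)) (c (i + 1)) ≤ η)
    (hWS : ∀ i ≤ k, W i ∈ S) (hcW : ∀ i ≤ k, dist (c i) (W i) ≤ κ) :
    ChainInLen f S (ε + η + κ) (W 0) (W k) k := by
  refine ⟨hk, W, hWS, rfl, rfl, fun i hi => ?_⟩
  calc dist (f (W i)) (W (i + 1))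
      ≤ dist (f (W i)) (f (c i)) + dist (f (c i)) (c (i + 1)) + dist (c (i + 1)) (W (i + 1)) :=
        dist_triangle4 _ _ _ _
    _ ≤ ε + η + κ := by
        gcongr
        exacts [hmod _ _ (dist_comm (c i) (W i) ▸ hcW i hi.le), hc i hi, hcW _ hi]

theorem ChainInLen.replace_ends (hmod : ∀ a b, dist a b ≤ κ → dist (f a) (f b) ≤ ε)
    (hκ : 0 ≤ κ) (h : ChainInLen f S η x y k) {x' y' : X} (hx' : x' ∈ S) (hy' : y' ∈ S)
    (hxx' : dist x x' ≤ κ) (hyy' : dist y y' ≤ κ) : ChainInLen f S (ε + η + κ) x' y' k := by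
  obtain ⟨hk, c, hcS, hc0, hck, hc⟩ := h
  have := chainInLen_of_forall_dist_le hmod hk hc
    (W := fun i => if i = 0 then x' else if i = k then y' else c i)
    (fun i hi => by split_ifs; exacts [hx', hy', hcS i hi])
    (fun i _ => by split_ifs with h0 hk' <;> simp [*])
  simpa [hk.ne'] using this

end Chains

section ChainRelation

variable {f : X → X} {x y z : X}

theorem ChainTo.trans (h₁ : ChainTo f x y) (h₂ : ChainTo f y z) : ChainTo f x z := fun δ hδ =>
  let ⟨_, hk⟩ := chainReach_iff.1 (h₁ δ hδ)
  let ⟨_, hl⟩ := chainReach_iff.1 (h₂ δ hδ)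
  chainReach_iff.2 ⟨_, hk.trans hl⟩

theorem chainTo_apply_right : ChainTo f x (f x) := fun _ hδ =>
  chainReach_iff.2 ⟨1, chainInLen_one (mem_univ _) (mem_univ _) (by simpa using hδ.le)⟩

theorem exists_uniform_modulus [CompactSpace X] (hf : Continuous f) {ε : ℝ} (hε : 0 < ε) :
    ∃ κ > 0, κ ≤ ε ∧ ∀ a b, dist a b ≤ κ → dist (f a) (f b) ≤ ε := by
  obtain ⟨κ, hκ, h⟩ :=
    Metric.uniformContinuous_iff.1 (CompactSpace.uniformContinuous_of_continuous hf) ε hε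
  refine ⟨min (κ / 2) ε, by positivity, min_le_right _ _, fun a b hab => (h ?_).le⟩
  linarith [min_le_left (κ / 2) ε]

theorem chainTo_of_forall_exists_near [CompactSpace X] (hf : Continuous f)
    (h : ∀ δ > 0, ∀ r > 0, ∃ a b, dist x a < r ∧ dist y b < r ∧ ChainReach f δ a b) :
    ChainTo f x y := by
  intro δ hδ
  obtain ⟨κ, hκ, hκδ, hmod⟩ := exists_uniform_modulus hf (by positivity : 0 < δ / 3)
  obtain ⟨a, b, hxa, hyb, hab⟩ := h (δ / 3) (by positivity) κ hκ
  obtain ⟨k, hk⟩ := chainReach_iff.1 hab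
  have := hk.replace_ends hmod hκ.le (mem_univ x) (mem_univ y)
    (by rw [dist_comm]; exact hxa.le) (by rw [dist_comm]; exact hyb.le)
  exact chainReach_iff.2 ⟨k, this.mono_delta (by linarith)⟩

theorem chainTo_apply_left [CompactSpace X] (hf : Continuous f) (hx : x ∈ CR f) :
    ChainTo f (f x) x := by
  refine chainTo_of_forall_exists_near hf fun δ hδ r hr => ?_
  obtain ⟨k, hk⟩ := chainReach_iff.1 (hx (min δ (r / 2)) (by positivity))
  -- a doubled cycle has length at least `2`, so its tail after the first step is nonempty
  obtain ⟨hkk, c, -, hc0, hck, hc⟩ := hk.trans hk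
  refine ⟨c 1, x, ?_, by simpa using hr, chainReach_iff.2 ⟨k + k - 1, ?_⟩⟩
  · have := hc 0 hkk
    rw [zero_add, hc0] at this
    linarith [min_le_right δ (r / 2)]
  · have := chainInLen_tail hc (i := 1) (by omega)
    rw [hck] at this
    exact this.mono_delta (min_le_left _ _)

end ChainRelation

namespace IsChainComponent

variable {f : X → X} {C : Set X} {u v q : X}

theorem mem_iff (hC : IsChainComponent f C) (hu : u ∈ C) :
    q ∈ C ↔ ChainTo f u q ∧ ChainTo f q u := by
  obtain ⟨s, -, rfl⟩ := hC
  obtain ⟨-, hsu, hus⟩ := hu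
  refine ⟨fun ⟨_, hsq, hqs⟩ => ⟨hus.trans hsq, hqs.trans hsu⟩, fun ⟨huq, hqu⟩ => ?_⟩
  exact ⟨hqu.trans huq, hsu.trans huq, hqu.trans hus⟩

theorem chainTo (hC : IsChainComponent f C) (hu : u ∈ C) (hv : v ∈ C) : ChainTo f u v :=
  ((hC.mem_iff hu).1 hv).1

theorem nonempty (hC : IsChainComponent f C) : C.Nonempty := by
  obtain ⟨s, hs, rfl⟩ := hC
  exact ⟨s, hs, hs, hs⟩

variable [CompactSpace X]

theorem mapsTo (hf : Continuous f) (hC : IsChainComponent f C) : MapsTo f C C := fun _ hu =>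
  (hC.mem_iff hu).2 ⟨chainTo_apply_right, chainTo_apply_left hf (hC.chainTo hu hu)⟩

theorem isClosed (hf : Continuous f) (hC : IsChainComponent f C) : IsClosed C := by
  obtain ⟨u, hu⟩ := hC.nonempty
  refine closure_subset_iff_isClosed.1 fun q hq => (hC.mem_iff hu).2 ⟨?_, ?_⟩ <;>
    refine chainTo_of_forall_exists_near hf fun δ hδ r hr => ?_ <;>
    obtain ⟨w, hw, hqw⟩ := Metric.mem_closure_iff.1 hq r hr
  · exact ⟨u, w, by simpa using hr, hqw, hC.chainTo hu hw δ hδ⟩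
  · exact ⟨w, u, hqw, by simpa using hr, hC.chainTo hw hu δ hδ⟩

theorem exists_infDist_lt_of_chain (hf : Continuous f) (hC : IsChainComponent f C)
    (hu : u ∈ C) (hv : v ∈ C) {ρ : ℝ} (hρ : 0 < ρ) :
    ∃ η > 0, ∀ (c : ℕ → X) (k : ℕ), c 0 = u → c k = v →
      (∀ i < k, dist (f (c i)) (c (i + 1)) ≤ η) → ∀ i ≤ k, infDist (c i) C < ρ := by
  by_contra! H
  choose c k hc0 hck hc i hik hfar using fun n : ℕ => H (1 / (n + 1)) Nat.one_div_pos_of_nat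
  have hfar' : ∀ n, ∀ w ∈ C, c n (i n) ≠ w := fun n w hw h =>
    (hfar n).not_gt (h ▸ (infDist_zero_of_mem hw).trans_lt hρ)
  have hi0 : ∀ n, 0 < i n := fun n => Nat.pos_of_ne_zero fun h => hfar' n u hu (h ▸ hc0 n)
  have hik' : ∀ n, i n < k n := fun n =>
    (hik n).lt_of_ne fun h => hfar' n v hv (h ▸ hck n)
  -- a cluster point of the far points lies on chains from `u` to `v`, hence in `C`
  obtain ⟨q, -, hq⟩ := isCompact_univ.exists_mapClusterPt (f := atTop)
    (u := fun n => c n (i n)) (by simp)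
  have hnear : ∀ δ > 0, ∀ r > 0, ∃ n : ℕ, 1 / ((n : ℝ) + 1) < δ ∧ dist (c n (i n)) q < r :=
    fun δ hδ r hr => ((mapClusterPt_iff_frequently.1 hq _ (ball_mem_nhds q hr)).and_eventually
      (tendsto_one_div_add_atTop_nhds_zero_nat.eventually_lt_const hδ)).exists.imp
      fun _ h => ⟨h.2, h.1⟩
  have huq : ChainTo f u q := chainTo_of_forall_exists_near hf fun δ hδ r hr => by
    obtain ⟨n, hnδ, hnq⟩ := hnear δ hδ r hr
    refine ⟨u, c n (i n), by simpa using hr, by rwa [dist_comm], chainReach_iff.2 ⟨i n, ?_⟩⟩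
    exact hc0 n ▸ (chainInLen_head (hc n) (hi0 n) (hik n)).mono_delta hnδ.le
  have hqv : ChainTo f q v := chainTo_of_forall_exists_near hf fun δ hδ r hr => by
    obtain ⟨n, hnδ, hnq⟩ := hnear δ hδ r hr
    refine ⟨c n (i n), v, by rwa [dist_comm], by simpa using hr, chainReach_iff.2 ⟨k n - i n, ?_⟩⟩
    exact hck n ▸ (chainInLen_tail (hc n) (hik' n)).mono_delta hnδ.le
  have hqC : q ∈ C := (hC.mem_iff hu).2 ⟨huq, hqv.trans (hC.chainTo hv hu)⟩
  obtain ⟨n, -, hn⟩ := hnear 1 one_pos ρ hρ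
  exact (hfar n).not_gt ((infDist_le_dist_of_mem hqC).trans_lt hn)

theorem chainTransitiveOn (hf : Continuous f) (hC : IsChainComponent f C) :
    ChainTransitiveOn f C := by
  intro u hu v hv δ hδ
  obtain ⟨κ, hκ, hκδ, hmod⟩ := exists_uniform_modulus hf (by positivity : 0 < δ / 3)
  obtain ⟨η, hη, hnear⟩ := hC.exists_infDist_lt_of_chain hf hu hv hκ
  obtain ⟨k, hk, c, -, hc0, hck, hc⟩ := chainReach_iff.1 (hC.chainTo hu hv _ (lt_min hη hκ))
  choose π hπC hπ using fun w => (hC.isClosed hf).exists_infDist_eq_dist hC.nonempty w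
  have hπ_fix : ∀ w ∈ C, π w = w := fun w hw =>
    (dist_eq_zero.1 ((hπ w).symm.trans (infDist_zero_of_mem hw))).symm
  have := chainInLen_of_forall_dist_le hmod hk hc (W := π ∘ c) (fun i _ => hπC _)
    fun i hi => (hπ _).symm.le.trans
      (hnear c k hc0 hck (fun j hj => (hc j hj).trans (min_le_left _ _)) i hi).le
  simp only [Function.comp, hc0, hck, hπ_fix u hu, hπ_fix v hv] at this
  exact ⟨k, this.mono_delta (by linarith [min_le_right η κ])⟩

theorem exists_chainInLen_le (hf : Continuous f) (hC : IsChainComponent f C) {δ : ℝ}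
    (hδ : 0 < δ) : ∃ R, ∀ u ∈ C, ∀ v ∈ C, ∃ k ≤ R, ChainInLen f C δ u v k := by
  obtain ⟨κ, hκ, hκδ, hmod⟩ := exists_uniform_modulus hf (by positivity : 0 < δ / 3)
  obtain ⟨t, htC, ht, hcover⟩ := finite_cover_balls_of_compact (hC.isClosed hf).isCompact hκ
  have : ∀ᶠ R in atTop, ∀ a ∈ t, ∀ b ∈ t, ∃ k ≤ R, ChainInLen f C κ a b k := by
    refine ht.eventually_all.2 fun a ha => ht.eventually_all.2 fun b hb => ?_
    obtain ⟨k, hk⟩ := hC.chainTransitiveOn hf a (htC ha) b (htC hb) κ hκ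
    exact eventually_atTop.2 ⟨k, fun R hR => ⟨k, hR, hk⟩⟩
  obtain ⟨R, hR⟩ := this.exists
  refine ⟨R, fun u hu v hv => ?_⟩
  obtain ⟨a, ha, hua⟩ := mem_iUnion₂.1 (hcover hu)
  obtain ⟨b, hb, hvb⟩ := mem_iUnion₂.1 (hcover hv)
  obtain ⟨k, hkR, hk⟩ := hR a ha b hb
  refine ⟨k, hkR, (hk.replace_ends hmod hκ.le hu hv ?_ ?_).mono_delta (by linarith)⟩
  exacts [(mem_ball'.1 hua).le, (mem_ball'.1 hvb).le]

end IsChainComponent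

namespace IsChainComponent

variable [CompactSpace X] {f : X → X} {C : Set X} {δ : ℝ} {u x₀ : X}

/-- `Nat.setGcd (cycLengths f C δ)` is the paper's `m(C, δ)`. -/
theorem exists_chainInLen_self_of_setGcd_dvd (hf : Continuous f) (hC : IsChainComponent f C)
    (hu : u ∈ C) (hδ : 0 < δ) :
    ∃ θ, ∀ m ≥ θ, Nat.setGcd (cycLengths f C δ) ∣ m → ChainInLen f C δ u u m := by
  set Z := {k | ChainInLen f C δ u u k}
  have hgcd : Nat.setGcd Z ∣ Nat.setGcd (cycLengths f C δ) := by
    refine Nat.dvd_setGcd_iff.2 fun l ⟨w, hw, hl⟩ => ?_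
    obtain ⟨l₁, h₁⟩ := hC.chainTransitiveOn hf u hu w hw δ hδ
    obtain ⟨l₂, h₂⟩ := hC.chainTransitiveOn hf w hw u hu δ hδ
    have hshort : Nat.setGcd Z ∣ l₁ + l₂ := Nat.setGcd_dvd_of_mem (h₁.trans h₂)
    have hlong : Nat.setGcd Z ∣ l₁ + l₂ + l := Nat.setGcd_dvd_of_mem <| by
      rw [add_right_comm]
      exact (h₁.trans hl).trans h₂
    exact (Nat.dvd_add_right hshort).1 hlong
  have hclosure : ∀ m ∈ AddSubmonoid.closure Z, m = 0 ∨ m ∈ Z := fun m hm => by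
    induction hm using AddSubmonoid.closure_induction with
    | mem m hm => exact Or.inr hm
    | zero => exact Or.inl rfl
    | add a b _ _ ha hb =>
      rcases ha with rfl | ha
      · simpa using hb
      rcases hb with rfl | hb
      · simpa using Or.inr ha
      exact Or.inr (ha.trans hb)
  obtain ⟨θ, hθ⟩ := Nat.exists_mem_closure_of_ge Z
  refine ⟨θ + 1, fun m hm hdvd => ?_⟩
  exact (hclosure m (hθ m (by omega) (hgcd.trans hdvd))).resolve_left (by omega)

theorem exists_chainInLen_iterate (hf : Continuous f) (hC : IsChainComponent f C)
    (hx₀ : x₀ ∈ C) (hδ : 0 < δ) {a : X} (ha : a ∈ classCdelta f C δ x₀) (N : ℕ) :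
    ∃ Θ, ∀ L ≥ Θ, ∀ b ∈ classCdelta f C δ x₀,
      ChainInLen f C δ (f^[N] a) (f^[L] b) (L - N) := by
  set g := Nat.setGcd (cycLengths f C δ)
  have hmaps := hC.mapsTo hf
  have hcycle : ∀ {k}, ChainInLen f C δ x₀ x₀ k → g ∣ k := fun h =>
    Nat.setGcd_dvd_of_mem ⟨x₀, hx₀, h⟩
  have hclass : ∀ b ∈ classCdelta f C δ x₀, ∃ ℓ, g ∣ ℓ ∧ ChainInLen f C δ x₀ b ℓ :=
    fun b ⟨_, ℓ, hℓ, h⟩ => ⟨ℓ, hℓ g fun _ => Nat.setGcd_dvd_of_mem, h⟩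
  obtain ⟨ℓa, hga, hxa⟩ := hclass a ha
  have hu : f^[N] a ∈ C := hmaps.iterate N ha.1
  obtain ⟨R, hR⟩ := hC.exists_chainInLen_le hf hδ
  obtain ⟨θ, hθ⟩ := hC.exists_chainInLen_self_of_setGcd_dvd hf hu hδ
  refine ⟨N + R + θ, fun L hL b hb => ?_⟩
  obtain ⟨ℓb, hgb, hxb⟩ := hclass b hb
  have hv : f^[L] b ∈ C := hmaps.iterate L hb.1
  obtain ⟨l, hlR, huv⟩ := hR _ hu _ hv
  obtain ⟨q, hvx⟩ := hC.chainTransitiveOn hf _ hv x₀ hx₀ δ hδ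
  -- compare the cycles `x₀ → f^[N] a → f^[L] b → x₀` and `x₀ → f^[L] b → x₀`
  have h₁ : g ∣ N + l + q := (Nat.dvd_add_right hga).1 <| by
    simpa only [add_assoc] using hcycle (((hxa.iterate_right hmaps hδ.le N).trans huv).trans hvx)
  have h₂ : g ∣ L + q := (Nat.dvd_add_right hgb).1 <| by
    simpa only [add_assoc] using hcycle ((hxb.iterate_right hmaps hδ.le L).trans hvx)
  have hg : g ∣ L - N - l :=
    (Nat.dvd_add_left h₁).1 (by rwa [show L - N - l + (N + l + q) = L + q by omega])
  have := (hθ _ (by omega) hg).trans huv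
  rwa [Nat.sub_add_cancel (by omega : l ≤ L - N)] at this

end IsChainComponent

section Shadowing

variable {f : X → X}

theorem SLimitShadowing.exists_dist_le_tendsto_of_chainInLen (hs : SLimitShadowing f) {ε : ℝ}
    (hε : 0 < ε) : ∃ δ > 0, ∀ y p M, ChainInLen f univ δ y (f^[M] p) M →
      ∃ z, dist z y ≤ ε ∧ Tendsto (fun i => dist (f^[i] z) (f^[i] p)) atTop (𝓝 0) := by
  obtain ⟨δ, hδ, hshadow⟩ := hs ε hε
  refine ⟨δ, hδ, fun y p M ⟨_, c, _, hc0, hcM, hc⟩ => ?_⟩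
  set w : ℕ → X := fun i => if i ≤ M then c i else f^[i] p
  have hwp : ∀ i ≥ M, w i = f^[i] p := fun i hi => by
    rcases hi.eq_or_lt with rfl | hi
    · simp [w, hcM]
    · simp [w, not_le.2 hi]
  have hjump : ∀ i ≥ M, dist (f (w i)) (w (i + 1)) = 0 := fun i hi => by
    rw [hwp i hi, hwp (i + 1) (by omega), Function.iterate_succ_apply', dist_self]
  have hpseudo : LimitPseudoOrbit f δ w := by
    refine ⟨fun i => ?_, tendsto_const_nhds.congr' (eventually_atTop.2 ⟨M, fun i hi => ?_⟩)⟩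
    · rcases lt_or_ge i M with hi | hi
      · simpa [w, hi.le, Nat.succ_le_of_lt hi] using hc i hi
      · exact (hjump i hi).trans_le hδ.le
    · exact (hjump i hi).symm
  obtain ⟨z, hz, hzw⟩ := hshadow w hpseudo
  refine ⟨z, by simpa [w, hc0] using hz 0, hzw.congr' ?_⟩
  exact eventually_atTop.2 ⟨M, fun i hi => by simp only [hwp i hi]⟩

theorem tendsto_infDist_of_tendsto_dist {ι : Type*} {l : Filter ι} {u v : ι → X} {s : ι → Set X}
    (hv : Tendsto (fun i => infDist (v i) (s i)) l (𝓝 0))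
    (huv : Tendsto (fun i => dist (u i) (v i)) l (𝓝 0)) :
    Tendsto (fun i => infDist (u i) (s i)) l (𝓝 0) :=
  squeeze_zero (fun _ => infDist_nonneg) (fun _ => infDist_le_infDist_add_dist)
    (by simpa using hv.add huv)

theorem mem_Vs_of_tendsto_dist {C : Set X} {x₀ p z : X} (hp : p ∈ Vs f C x₀)
    (h : Tendsto (fun i => dist (f^[i] z) (f^[i] p)) atTop (𝓝 0)) : z ∈ Vs f C x₀ :=
  ⟨tendsto_infDist_of_tendsto_dist hp.1 h,
    fun δ hδ => tendsto_infDist_of_tendsto_dist (hp.2 δ hδ) h⟩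

theorem exists_mem_Vs_dist_le_tendsto [CompactSpace X] (hf : Continuous f)
    (hs : SLimitShadowing f) {C : Set X} (hC : IsChainComponent f C) {x₀ p y : X}
    (hx₀ : x₀ ∈ C) (hp : p ∈ Vs f C x₀) (hy : y ∈ Vs f C x₀) {ε : ℝ} (hε : 0 < ε) :
    ∃ z ∈ Vs f C x₀, dist z y ≤ ε ∧ Tendsto (fun i => dist (f^[i] z) (f^[i] p)) atTop (𝓝 0) := by
  obtain ⟨δ, hδ, hshadow⟩ := hs.exists_dist_le_tendsto_of_chainInLen hε
  set D := classCdelta f C δ x₀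
  have hx₀D : x₀ ∈ D := by
    obtain ⟨k, hk⟩ := hC.chainTransitiveOn hf x₀ hx₀ x₀ hx₀ δ hδ
    exact ⟨hx₀, k, fun d hd => hd k ⟨x₀, hx₀, hk⟩, hk⟩
  have hnear : ∀ w ∈ Vs f C x₀, ∀ᶠ i in atTop, ∃ b ∈ D, dist (f^[i] w) (f^[i] b) < δ :=
    fun w hw => ((hw.2 δ hδ).eventually_lt_const hδ).mono fun i hi => by
      obtain ⟨_, ⟨b, hb, rfl⟩, h⟩ := (infDist_lt_iff ⟨_, mem_image_of_mem _ hx₀D⟩).1 hi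
      exact ⟨b, hb, h⟩
  obtain ⟨N, hN, a, ha, hya⟩ := ((eventually_ge_atTop 1).and (hnear y hy)).exists
  obtain ⟨Θ, hΘ⟩ := hC.exists_chainInLen_iterate hf hx₀ hδ ha N
  obtain ⟨M, hM, b, hb, hpb⟩ := ((eventually_ge_atTop (Θ + 1)).and (hnear p hp)).exists
  -- jump from the orbit of `y` to that of `a`, cross `C`, then jump onto the orbit of `p`
  have hab := hΘ (M - 1) (by omega) b hb
  have hNM : N < M - 1 := by have := hab.1; omega
  have hbp : dist (f^[1] (f^[M - 1] b)) (f^[M] p) ≤ δ := by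
    rw [← Function.iterate_add_apply, Nat.add_sub_cancel' (by omega), dist_comm]
    exact hpb.le
  have hchain := ((chainInLen_univ_of_dist_iterate_le hN hya.le).trans
    (hab.mono_set (subset_univ _))).trans (chainInLen_univ_of_dist_iterate_le one_pos hbp)
  rw [show N + (M - 1 - N) + 1 = M by omega] at hchain
  obtain ⟨z, hzy, hz⟩ := hshadow y p M hchain
  exact ⟨z, mem_Vs_of_tendsto_dist hp hz, hzy, hz⟩

end Shadowing

section UpperDensity

variable {A B : Set ℕ}

theorem ncard_inter_Iio_div_le_one (A : Set ℕ) (n : ℕ) : ((A ∩ Iio n).ncard : ℝ) / n ≤ 1 := by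
  refine div_le_one_of_le₀ ?_ n.cast_nonneg
  exact_mod_cast (ncard_le_ncard inter_subset_right (finite_Iio n)).trans (ncard_Iio_nat n).le

theorem isBoundedUnder_ncard_inter_Iio_div (A : Set ℕ) :
    IsBoundedUnder (· ≤ ·) atTop fun n => ((A ∩ Iio n).ncard : ℝ) / n :=
  isBoundedUnder_of ⟨1, ncard_inter_Iio_div_le_one A⟩

theorem isCoboundedUnder_ncard_inter_Iio_div (A : Set ℕ) :
    IsCoboundedUnder (· ≤ ·) atTop fun n => ((A ∩ Iio n).ncard : ℝ) / n :=
  isCoboundedUnder_le_of_le atTop fun _ => by positivity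

theorem upperDensity_le_one (A : Set ℕ) : upperDensity A ≤ 1 :=
  limsup_le_of_le (isCoboundedUnder_ncard_inter_Iio_div A)
    (Eventually.of_forall (ncard_inter_Iio_div_le_one A))

theorem upperDensity_mono (h : A ⊆ B) : upperDensity A ≤ upperDensity B := by
  refine limsup_le_limsup (Eventually.of_forall fun n => ?_)
    (isCoboundedUnder_ncard_inter_Iio_div A) (isBoundedUnder_ncard_inter_Iio_div B)
  refine div_le_div_of_nonneg_right ?_ n.cast_nonneg
  exact_mod_cast ncard_le_ncard (inter_subset_inter_left _ h)
    ((finite_Iio n).subset inter_subset_right)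

theorem upperDensity_eq_one_iff :
    upperDensity A = 1 ↔
      ∀ m : ℕ, ∃ᶠ n in atTop, 1 - 1 / ((m : ℝ) + 1) < ((A ∩ Iio n).ncard : ℝ) / n := by
  rw [← (upperDensity_le_one A).ge_iff_eq, upperDensity,
    le_limsup_iff (isCoboundedUnder_ncard_inter_Iio_div A) (isBoundedUnder_ncard_inter_Iio_div A)]
  refine ⟨fun h m => h _ (sub_lt_self _ Nat.one_div_pos_of_nat), fun h c hc => ?_⟩
  obtain ⟨m, hm⟩ := exists_nat_one_div_lt (sub_pos.2 hc)
  exact (h m).mono fun n hn => (by linarith : c < 1 - 1 / ((m : ℝ) + 1)).trans hn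

theorem upperDensity_eq_one_of_eventually_mem (h : ∀ᶠ i in atTop, i ∈ A) :
    upperDensity A = 1 := by
  obtain ⟨N, hN⟩ := eventually_atTop.1 h
  have hlow : ∀ᶠ n : ℕ in atTop, 1 - (N : ℝ) / n ≤ ((A ∩ Iio n).ncard : ℝ) / n := by
    filter_upwards [eventually_gt_atTop 0] with n hn
    have hcard : n ≤ (A ∩ Iio n).ncard + N := by
      have := ncard_le_ncard (t := A ∩ Iio n)
        (fun i hi => ⟨hN i (mem_Ico.1 hi).1, (mem_Ico.1 hi).2⟩)
        ((finite_Iio n).subset inter_subset_right)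
      rw [ncard_Ico_nat] at this
      omega
    have hcard' : (n : ℝ) ≤ (A ∩ Iio n).ncard + N := by exact_mod_cast hcard
    rw [one_sub_div (by positivity)]
    exact div_le_div_of_nonneg_right (by linarith) n.cast_nonneg
  have hlim : Tendsto (fun n : ℕ => 1 - (N : ℝ) / n) atTop (𝓝 1) := by
    simpa using tendsto_const_nhds.sub (tendsto_const_div_atTop_nhds_zero_nat (N : ℝ))
  exact (tendsto_of_tendsto_of_tendsto_of_le_of_le' hlim tendsto_const_nhds hlow
    (Eventually.of_forall (ncard_inter_Iio_div_le_one A))).limsup_eq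

variable {α : Type*} [TopologicalSpace α]

theorem isOpen_setOf_lt_ncard_inter_Iio_div {A : α → Set ℕ} (hA : ∀ i, IsOpen {x | i ∈ A x})
    (c : ℝ) (n : ℕ) : IsOpen {x | c < ((A x ∩ Iio n).ncard : ℝ) / n} := by
  refine isOpen_iff_mem_nhds.2 fun x hx => ?_
  have hfin : (A x ∩ Iio n).Finite := (finite_Iio n).subset inter_subset_right
  filter_upwards [(hfin.isOpen_biInter fun i _ => hA i).mem_nhds
    (mem_iInter₂.2 fun i hi => hi.1)] with y hy
  refine hx.trans_le (div_le_div_of_nonneg_right ?_ n.cast_nonneg)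
  exact_mod_cast ncard_le_ncard (t := A y ∩ Iio n) (fun i hi => ⟨mem_iInter₂.1 hy i hi, hi.2⟩)
    ((finite_Iio n).subset inter_subset_right)

theorem isGδ_setOf_upperDensity_eq_one {A : α → Set ℕ} (hA : ∀ i, IsOpen {x | i ∈ A x}) :
    IsGδ {x | upperDensity (A x) = 1} := by
  have : {x | upperDensity (A x) = 1} = ⋂ m : ℕ, ⋂ N : ℕ, ⋃ n ≥ N,
      {x | 1 - 1 / ((m : ℝ) + 1) < ((A x ∩ Iio n).ncard : ℝ) / n} := by
    ext x
    simp only [mem_ofPred_eq, upperDensity_eq_one_iff, frequently_atTop, mem_iInter, mem_iUnion,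
      exists_prop]
  rw [this]
  exact .iInter fun m => .iInter fun N =>
    (isOpen_biUnion fun n _ => isOpen_setOf_lt_ncard_inter_Iio_div hA _ n).isGδ

theorem isGδ_setOf_forall_upperDensity_eq_one {A : α → ℝ → Set ℕ}
    (hmono : ∀ x, Monotone (A x)) (hA : ∀ ε i, IsOpen {x | i ∈ A x ε}) :
    IsGδ {x | ∀ ε > 0, upperDensity (A x ε) = 1} := by
  have : {x | ∀ ε > 0, upperDensity (A x ε) = 1} =
      ⋂ m : ℕ, {x | upperDensity (A x (1 / ((m : ℝ) + 1))) = 1} := by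
    ext x
    simp only [mem_ofPred_eq, mem_iInter]
    refine ⟨fun h m => h _ Nat.one_div_pos_of_nat, fun h ε hε => ?_⟩
    obtain ⟨m, hm⟩ := exists_nat_one_div_lt hε
    exact (upperDensity_le_one _).antisymm ((h m).symm.trans_le (upperDensity_mono (hmono x hm.le)))
  rw [this]
  exact .iInter fun m => isGδ_setOf_upperDensity_eq_one (hA _)

end UpperDensity

theorem isOpen_setOf_forall_lt_dist_lt {ι α : Type*} [Finite ι] [LT ι] [TopologicalSpace α]
    {g : ι → α → X} (hg : ∀ j, Continuous (g j)) (ε : ℝ) :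
    IsOpen {x | ∀ j k, j < k → dist (g j x) (g k x) < ε} := by
  simp only [ofPred_forall]
  exact isOpen_iInter_of_finite fun j => isOpen_iInter_of_finite fun k =>
    isOpen_iInter_of_finite fun _ => isOpen_lt ((hg j).dist (hg k)) continuous_const

theorem upperDensity_setOf_forall_dist_lt_eq_one_of_tendsto {ι : Type*} [Finite ι] [LT ι]
    {u : ι → ℕ → X} {v : ℕ → X} (h : ∀ j, Tendsto (fun i => dist (v i) (u j i)) atTop (𝓝 0))
    {ε : ℝ} (hε : 0 < ε) : upperDensity {i | ∀ j k, j < k → dist (u j i) (u k i) < ε} = 1 := by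
  refine upperDensity_eq_one_of_eventually_mem ?_
  filter_upwards [eventually_all.2 fun j => (h j).eventually_lt_const (half_pos hε)]
    with i hi j k _
  calc dist (u j i) (u k i) ≤ dist (v i) (u j i) + dist (v i) (u k i) := dist_triangle_left _ _ _
    _ < ε / 2 + ε / 2 := add_lt_add (hi j) (hi k)
    _ = ε := add_halves ε

theorem dense_setOf_tendsto_dist_iterate [CompactSpace X] {f : X → X} (hf : Continuous f)
    (hs : SLimitShadowing f) {C : Set X} (hC : IsChainComponent f C) {x₀ p : X} (hx₀ : x₀ ∈ C)
    (hp : p ∈ Vs f C x₀) :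
    Dense {y : Vs f C x₀ | Tendsto (fun i => dist (f^[i] p) (f^[i] (y : X))) atTop (𝓝 0)} := by
  refine Metric.dense_iff.2 fun y r hr => ?_
  obtain ⟨z, hz, hzy, hzp⟩ := exists_mem_Vs_dist_le_tendsto hf hs hC hx₀ hp y.2 (half_pos hr)
  exact ⟨⟨z, hz⟩, mem_ball.2 (hzy.trans_lt (half_lt_self hr)), hzp.congr fun _ => dist_comm _ _⟩

theorem stmt18_general {X : Type*} [MetricSpace X] [CompactSpace X]
    (f : X → X) (hf : Continuous f) (hs : SLimitShadowing f)
    (C : Set X) (hC : IsChainComponent f C) (x₀ : X) (hx₀ : x₀ ∈ C)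
    (p : X) (hp : p ∈ Vs f C x₀) (n : ℕ) :
    IsGδ {x : Fin n → Vs f C x₀ | ∀ ε > 0,
        upperDensity {i | ∀ j k : Fin n, j < k →
          dist (f^[i] (x j : X)) (f^[i] (x k : X)) < ε} = 1} ∧
    Dense {x : Fin n → Vs f C x₀ | ∀ ε > 0,
        upperDensity {i | ∀ j k : Fin n, j < k →
          dist (f^[i] (x j : X)) (f^[i] (x k : X)) < ε} = 1} ∧
    Dense {x : Fin n → Vs f C x₀ | ∀ j : Fin n,
        Tendsto (fun i => dist (f^[i] p) (f^[i] (x j : X))) atTop (𝓝 0)} ∧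
    {x : Fin n → Vs f C x₀ | ∀ j : Fin n,
        Tendsto (fun i => dist (f^[i] p) (f^[i] (x j : X))) atTop (𝓝 0)} ⊆
      {x : Fin n → Vs f C x₀ | ∀ ε > 0,
        upperDensity {i | ∀ j k : Fin n, j < k →
          dist (f^[i] (x j : X)) (f^[i] (x k : X)) < ε} = 1} := by
  have hGδ := isGδ_setOf_forall_upperDensity_eq_one
    (A := fun (x : Fin n → Vs f C x₀) ε => {i | ∀ j k : Fin n, j < k →
      dist (f^[i] (x j : X)) (f^[i] (x k : X)) < ε})
    (fun x ε ε' hεε' i hi j k hjk => (hi j k hjk).trans_le hεε')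
    (fun ε i => isOpen_setOf_forall_lt_dist_lt
      (fun j => (hf.iterate i).comp (continuous_subtype_val.comp (continuous_apply j))) ε)
  have hdense : Dense {x : Fin n → Vs f C x₀ | ∀ j : Fin n,
      Tendsto (fun i => dist (f^[i] p) (f^[i] (x j : X))) atTop (𝓝 0)} := by
    have := dense_pi univ fun (_ : Fin n) _ => dense_setOf_tendsto_dist_iterate hf hs hC hx₀ hp
    exact this.mono fun x hx j => (mem_univ_pi.1 hx) j
  refine ⟨hGδ, hdense.mono ?sub, hdense, ?sub⟩
  exact fun x hx ε hε => upperDensity_setOf_forall_dist_lt_eq_one_of_tendsto hx hε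

/-- Under s-limit shadowing, the set `Aₙ` of tuples in `[V^s(D)]ⁿ` whose
proximality times have upper density one is a dense Gδ set; indeed the tuples
asymptotic to a fixed `p ∈ V^s(D)` form a dense subset of it. -/
theorem stmt18 {X : Type*} [MetricSpace X] [CompactSpace X]
    (f : X → X) (hf : Continuous f) (hs : SLimitShadowing f)
    (C : Set X) (hC : IsChainComponent f C) (x₀ : X) (hx₀ : x₀ ∈ C)
    (p : X) (hp : p ∈ Vs f C x₀) (n : ℕ) (hn : 2 ≤ n) :
    IsGδ {x : Fin n → Vs f C x₀ | ∀ ε > 0,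
        upperDensity {i | ∀ j k : Fin n, j < k →
          dist (f^[i] (x j : X)) (f^[i] (x k : X)) < ε} = 1} ∧
    Dense {x : Fin n → Vs f C x₀ | ∀ ε > 0,
        upperDensity {i | ∀ j k : Fin n, j < k →
          dist (f^[i] (x j : X)) (f^[i] (x k : X)) < ε} = 1} ∧
    Dense {x : Fin n → Vs f C x₀ | ∀ j : Fin n,
        Tendsto (fun i => dist (f^[i] p) (f^[i] (x j : X))) atTop (𝓝 0)} ∧
    {x : Fin n → Vs f C x₀ | ∀ j : Fin n,
        Tendsto (fun i => dist (f^[i] p) (f^[i] (x j : X))) atTop (𝓝 0)} ⊆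
      {x : Fin n → Vs f C x₀ | ∀ ε > 0,
        upperDensity {i | ∀ j k : Fin n, j < k →
          dist (f^[i] (x j : X)) (f^[i] (x k : X)) < ε} = 1} :=
  stmt18_general f hf hs C hC x₀ hx₀ p hp n
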